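/- The quotient of SL(2,Z) by its commutator subgroup is cyclic of order 12, generated by the image of the matrix T = [[1,1],[0,1]]. -/

import Mathlib

/-!
In the abelianization the relations `S⁴ = 1` and `(ST)³ = S²` of `SL(2,ℤ)` give `S = T⁻³` and
`T¹² = 1`; since `S` and `T` generate `SL(2,ℤ)`, the image of `T` generates a cyclic group of
order dividing 12. Conversely, reduction modulo 3 and modulo 4 followed by explicit characters of
`SL(2, ℤ/3)` and `SL(2, ℤ/4)` send `T` to a generator of `ℤ/3` and of `ℤ/4`, so the order of
the image of `T` is divisible by 12.
-/

open Matrix MatrixGroups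

theorem Subgroup.zpowers_map_eq_top_of_closure_pair_eq_top {G H : Type*} [Group G] [Group H]
    {f : G →* H} (hf : Function.Surjective f) {s t : G} (hst : Subgroup.closure {s, t} = ⊤)
    (hs : f s ∈ Subgroup.zpowers (f t)) : Subgroup.zpowers (f t) = ⊤ := by
  rw [eq_top_iff, ← MonoidHom.range_eq_top.2 hf, MonoidHom.range_eq_map, ← hst,
    MonoidHom.map_closure, Subgroup.closure_le, Set.image_pair, Set.pair_subset_iff]
  exact ⟨hs, Subgroup.mem_zpowers _⟩

theorem eq_inv_pow_three_of_mul_pow_three_eq_sq {A : Type*} [CommGroup A] {s t : A}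
    (h : (s * t) ^ 3 = s ^ 2) : s = (t ^ 3)⁻¹ := by
  rw [eq_inv_iff_mul_eq_one, ← mul_left_cancel_iff (a := s ^ 2), mul_one]
  nth_rw 2 [← h]
  rw [mul_pow]
  group

theorem dvd_orderOf_of_map_eq_ofAdd_one {G : Type*} [Group G] {n : ℕ}
    (f : G →* Multiplicative (ZMod n)) {g : G} (h : f g = Multiplicative.ofAdd 1) :
    n ∣ orderOf g := by
  simpa [h, orderOf_ofAdd_eq_addOrderOf] using orderOf_map_dvd f g

namespace ModularGroup

lemma S_pow_four : S ^ 4 = 1 := by decide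

lemma S_mul_T_pow_three : (S * T) ^ 3 = S ^ 2 := by decide

/- Polynomial formulas for the abelianization maps `SL(2, ℤ/3) → ℤ/3` and `SL(2, ℤ/4) → ℤ/4`;
the groups being finite, the homomorphism laws are checked by `decide`. -/
def charMod3 : SL(2, ZMod 3) →* Multiplicative (ZMod 3) where
  toFun A := Multiplicative.ofAdd (A 0 0 * A 1 0 + A 0 1 * A 1 1 + A 1 0 * A 1 1
    + 2 * A 0 1 * A 1 0 ^ 2 * A 1 1)
  map_one' := by decide
  map_mul' := by decide

set_option maxRecDepth 10000 in
def charMod4 : SL(2, ZMod 4) →* Multiplicative (ZMod 4) where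
  toFun A := Multiplicative.ofAdd (2 + A 0 0 + 3 * A 0 1 + 2 * A 1 0 + 2 * A 1 1
    + A 0 0 * A 1 0 + 3 * A 0 0 * A 1 1 + A 0 1 * A 1 1
    + A 0 0 * A 0 1 * A 1 0 + A 0 0 * A 0 1 * A 1 1)
  map_one' := by decide
  map_mul' := by decide

lemma charMod3_map_T : charMod3 (SpecialLinearGroup.map (Int.castRingHom _) T) =
    Multiplicative.ofAdd 1 := by decide

lemma charMod4_map_T : charMod4 (SpecialLinearGroup.map (Int.castRingHom _) T) =
    Multiplicative.ofAdd 1 := by decide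

end ModularGroup

theorem abelianization_SL2Z_cyclic_order_twelve :
    Nat.card (Abelianization SL(2,ℤ)) = 12 ∧
    Subgroup.zpowers (Abelianization.of ModularGroup.T) = ⊤ := by
  open ModularGroup in
  set t := Abelianization.of T
  have hS : Abelianization.of S = (t ^ 3)⁻¹ :=
    eq_inv_pow_three_of_mul_pow_three_eq_sq <| by
      rw [← map_mul, ← map_pow, ← map_pow, S_mul_T_pow_three]
  have ht12 : t ^ 12 = 1 := by
    rw [show 12 = 3 * 4 by rfl, pow_mul, ← inv_eq_one, ← inv_pow, ← hS, ← map_pow, S_pow_four,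
      map_one]
  have htop : Subgroup.zpowers t = ⊤ :=
    Subgroup.zpowers_map_eq_top_of_closure_pair_eq_top QuotientGroup.mk_surjective
      SpecialLinearGroup.SL2Z_generators (hS ▸ inv_mem (pow_mem (Subgroup.mem_zpowers t) 3))
  have h3 : 3 ∣ orderOf t := dvd_orderOf_of_map_eq_ofAdd_one
    (Abelianization.lift (charMod3.comp (SpecialLinearGroup.map (Int.castRingHom _))))
    charMod3_map_T
  have h4 : 4 ∣ orderOf t := dvd_orderOf_of_map_eq_ofAdd_one
    (Abelianization.lift (charMod4.comp (SpecialLinearGroup.map (Int.castRingHom _))))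
    charMod4_map_T
  refine ⟨?_, htop⟩
  rw [← orderOf_eq_card_of_forall_mem_zpowers (fun x ↦ htop ▸ Subgroup.mem_top x)]
  exact Nat.dvd_antisymm (orderOf_dvd_of_pow_eq_one ht12)
    (Nat.Coprime.mul_dvd_of_dvd_of_dvd (by norm_num) h3 h4)
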